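/- Conversely, if g(0) ≤ Σ_{m=1}^{L-1} |g(m)| (with g(0) > 0), then there exist a_k ∈ {-1,1} and upcoming symbols a_{k+1},…,a_{k+L-1} ∈ {-1,1} such that the sign of g(0)·a_k + Σ_{m=1}^{L-1} g(m)·a_{k+m} does not strictly agree with a_k, i.e., a_k·(g(0)·a_k + Σ_{m=1}^{L-1} g(m)·a_{k+m}) ≤ 0. -/
import Mathlib


/-- If g 0 ≤ Σ_{m=1}^{L-1} |g m| (with g 0 > 0), then there exist
BPSK symbols a k and a_{k+1},…,a_{k+L-1} ∈ {-1,1} such that the decision margin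
a k · (g 0 · a k + Σ g m · a (k+m)) ≤ 0. -/
theorem stmt3 (g : ℕ → ℝ) (L : ℕ) (hg0 : 0 < g 0)
    (hfail : g 0 ≤ ∑ m ∈ Finset.Icc 1 (L - 1), |g m|) (k : ℤ) :
    ∃ a : ℤ → ℝ, (∀ i, a i = 1 ∨ a i = -1) ∧
      a k * (g 0 * a k + ∑ m ∈ Finset.Icc 1 (L - 1), g m * a (k + (m : ℤ))) ≤ 0 := by
  refine ⟨fun i => if i = k then 1 else (if 0 ≤ g (i - k).toNat then -1 else 1), ?_, ?_⟩
  · intro i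
    by_cases h : i = k <;> simp [h] <;> by_cases h2 : 0 ≤ g (i - k).toNat <;> simp [h2]
  · have hak : (if k = k then (1:ℝ) else (if 0 ≤ g (k - k).toNat then -1 else 1)) = 1 := by
      simp
    simp only [if_true]
    have hsum : ∀ m ∈ Finset.Icc 1 (L - 1),
        g m * (if k + (m:ℤ) = k then (1:ℝ) else
          (if 0 ≤ g ((k + (m:ℤ)) - k).toNat then -1 else 1)) = -|g m| := by
      intro m hm
      have hm1 : 1 ≤ m := (Finset.mem_Icc.mp hm).1
      have hne : k + (m:ℤ) ≠ k := by omega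
      have ht : ((k + (m:ℤ)) - k).toNat = m := by omega
      rw [if_neg hne, ht]
      by_cases h2 : 0 ≤ g m
      · rw [if_pos h2, abs_of_nonneg h2]; ring
      · rw [if_neg h2, abs_of_neg (lt_of_not_ge h2)]; ring
    rw [Finset.sum_congr rfl hsum, Finset.sum_neg_distrib]
    linarith
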